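/- Let Δx > 0 and let x_i ∈ ℝ. For l ∈ {i−1, i, i+1}, let I_l denote the interval (x_i + (l − i − 1/2)Δx, x_i + (l − i + 1/2)Δx) of width Δx. Then for any prescribed cell averages a_{i−1}, a_i, a_{i+1} ∈ ℝ and cell-averaged slopes b_{i−1}, b_{i+1} ∈ ℝ, there exists a unique real polynomial p of degree at most 4 satisfying (1/Δx) ∫_{I_l} p(x) dx = a_l for l = i−1, i, i+1 and (1/Δx) ∫_{I_l} p'(x) dx = b_l for l = i−1, i+1. -/

import Mathlib

/-!
The data map sending a polynomial to its three cell averages and two slope averages is linear,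
and polynomials of degree at most 4 form a space of dimension 5, so existence and uniqueness
both follow once the kernel is trivial. The substitution x = xi + Δx s turns the stencil into the
unit stencil (-3/2, -1/2, 1/2, 3/2), where a slope average is a difference of endpoint values, and
the homogeneous conditions become a nonsingular 5 × 5 system for the coefficients.
-/

open MeasureTheory Polynomial

theorem Polynomial.existsUnique_degree_le_of_eq_zero {K V : Type*} [Field K] [AddCommGroup V]
    [Module K V] [FiniteDimensional K V] {n : ℕ} (hV : Module.finrank K V = n + 1)
    (D : K[X] →ₗ[K] V) (hD : ∀ p : K[X], p.degree ≤ n → D p = 0 → p = 0) (v : V) :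
    ∃! p : K[X], p.degree ≤ n ∧ D p = v := by
  let e : degreeLE K n ≃ₗ[K] Fin (n + 1) → K :=
    (LinearEquiv.ofEq _ _ degreeLT_succ_eq_degreeLE).symm.trans (degreeLTEquiv K (n + 1))
  have := e.symm.finiteDimensional
  let f := D.domRestrict (degreeLE K n)
  have hf : Function.Injective f :=
    (injective_iff_map_eq_zero f).mpr fun p hp => Subtype.ext (hD p (mem_degreeLE.mp p.2) hp)
  have hdim : Module.finrank K (degreeLE K n) = Module.finrank K V := by
    rw [hV, e.finrank_eq, Module.finrank_fin_fun]
  have hbij : Function.Bijective f :=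
    ⟨hf, (LinearMap.injective_iff_surjective_of_finrank_eq_finrank hdim).mp hf⟩
  obtain ⟨⟨p, hp⟩, hpv, huniq⟩ := hbij.existsUnique v
  exact ⟨p, ⟨mem_degreeLE.mp hp, hpv⟩, fun q ⟨hq, hqv⟩ =>
    congrArg Subtype.val (huniq ⟨q, mem_degreeLE.mpr hq⟩ hqv)⟩

theorem Polynomial.intervalIntegral_eval_eq_sum {p : ℝ[X]} {n : ℕ} (hp : p.natDegree < n)
    (a b : ℝ) : ∫ x in a..b, p.eval x =
      ∑ k ∈ Finset.range n, p.coeff k * ((b ^ (k + 1) - a ^ (k + 1)) / (k + 1)) := by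
  simp_rw [eval_eq_sum_range' hp]
  rw [intervalIntegral.integral_finsetSum fun k _ =>
    (by fun_prop : Continuous fun x : ℝ => p.coeff k * x ^ k).intervalIntegrable a b]
  simp [integral_pow]

theorem Polynomial.integral_Ioo_eval_eq_mul_integral_comp (q : ℝ[X]) {c : ℝ} (hc : 0 < c)
    {d s t l r : ℝ} (hst : s ≤ t) (hl : c * s + d = l) (hr : c * t + d = r) :
    ∫ x in Set.Ioo l r, q.eval x = c * ∫ x in s..t, (q.comp (C c * X + C d)).eval x := by
  have hlr : l ≤ r := by rw [← hl, ← hr]; gcongr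
  simp only [eval_comp, eval_add, eval_mul, eval_C, eval_X]
  rw [intervalIntegral.integral_comp_mul_add (fun x => q.eval x) hc.ne', smul_eq_mul,
    mul_inv_cancel_left₀ hc.ne', hl, hr, intervalIntegral.integral_of_le hlr,
    integral_Ioc_eq_integral_Ioo]

theorem Polynomial.integral_Ioo_eval_derivative (q : ℝ[X]) {l r : ℝ} (h : l ≤ r) :
    ∫ x in Set.Ioo l r, (derivative q).eval x = q.eval r - q.eval l := by
  rw [← integral_Ioc_eq_integral_Ioo, ← intervalIntegral.integral_of_le h]
  exact intervalIntegral.integral_eq_sub_of_hasDerivAt (fun x _ => q.hasDerivAt x)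
    (q.derivative.continuous.intervalIntegrable l r)

noncomputable def Polynomial.integralIooₗ (l r : ℝ) : ℝ[X] →ₗ[ℝ] ℝ where
  toFun p := ∫ x in Set.Ioo l r, p.eval x
  map_add' p q := by
    simpa using integral_add (p.continuous.integrableOn_Icc.mono_set Set.Ioo_subset_Icc_self)
      (q.continuous.integrableOn_Icc.mono_set Set.Ioo_subset_Icc_self)
  map_smul' c p := by simp [integral_const_mul]

theorem eq_zero_of_shweno_unit_stencil {p : ℝ[X]} (hp : p.degree ≤ 4)
    (h₁ : ∫ x in (-3 / 2 : ℝ)..(-1 / 2), p.eval x = 0)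
    (h₂ : ∫ x in (-1 / 2 : ℝ)..(1 / 2), p.eval x = 0)
    (h₃ : ∫ x in (1 / 2 : ℝ)..(3 / 2), p.eval x = 0)
    (h₄ : p.eval (-1 / 2) = p.eval (-3 / 2)) (h₅ : p.eval (3 / 2) = p.eval (1 / 2)) :
    p = 0 := by
  have hp5 : p.natDegree < 5 := Nat.lt_succ_of_le (natDegree_le_of_degree_le (n := 4) hp)
  rw [intervalIntegral_eval_eq_sum hp5] at h₁ h₂ h₃
  simp only [eval_eq_sum_range' hp5, Finset.sum_range_succ, Finset.sum_range_zero]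
    at h₁ h₂ h₃ h₄ h₅
  norm_num at h₁ h₂ h₃ h₄ h₅
  ext k
  match k with
  | 0 | 1 | 2 | 3 | 4 => simp only [coeff_zero]; linarith
  | k + 5 => simp [coeff_eq_zero_of_natDegree_lt (show p.natDegree < k + 5 by omega)]

noncomputable def shwenoData (Δx xi : ℝ) : ℝ[X] →ₗ[ℝ] ℝ × ℝ × ℝ × ℝ × ℝ :=
  (1 / Δx) • ((integralIooₗ (xi - (3 / 2) * Δx) (xi - (1 / 2) * Δx)).prod <|
    (integralIooₗ (xi - (1 / 2) * Δx) (xi + (1 / 2) * Δx)).prod <|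
    (integralIooₗ (xi + (1 / 2) * Δx) (xi + (3 / 2) * Δx)).prod <|
    (integralIooₗ (xi - (3 / 2) * Δx) (xi - (1 / 2) * Δx) ∘ₗ derivative).prod
    (integralIooₗ (xi + (1 / 2) * Δx) (xi + (3 / 2) * Δx) ∘ₗ derivative))

theorem shwenoData_apply (Δx xi : ℝ) (q : ℝ[X]) :
    shwenoData Δx xi q =
      ((1 / Δx) * ∫ x in Set.Ioo (xi - (3 / 2) * Δx) (xi - (1 / 2) * Δx), q.eval x,
        (1 / Δx) * ∫ x in Set.Ioo (xi - (1 / 2) * Δx) (xi + (1 / 2) * Δx), q.eval x,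
        (1 / Δx) * ∫ x in Set.Ioo (xi + (1 / 2) * Δx) (xi + (3 / 2) * Δx), q.eval x,
        (1 / Δx) *
          ∫ x in Set.Ioo (xi - (3 / 2) * Δx) (xi - (1 / 2) * Δx), (derivative q).eval x,
        (1 / Δx) *
          ∫ x in Set.Ioo (xi + (1 / 2) * Δx) (xi + (3 / 2) * Δx), (derivative q).eval x) :=
  rfl

theorem eq_zero_of_shwenoData_eq_zero {Δx : ℝ} (hΔx : 0 < Δx) (xi : ℝ) {q : ℝ[X]}
    (hq : q.degree ≤ 4) (h : shwenoData Δx xi q = 0) : q = 0 := by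
  simp only [shwenoData_apply, Prod.mk_eq_zero, mul_eq_zero, one_div, inv_eq_zero, hΔx.ne',
    false_or] at h
  obtain ⟨h₁, h₂, h₃, h₄, h₅⟩ := h
  rw [integral_Ioo_eval_derivative _ (by linarith), sub_eq_zero] at h₄ h₅
  rw [integral_Ioo_eval_eq_mul_integral_comp q hΔx (d := xi) (s := -3 / 2) (t := -1 / 2)
    (by norm_num) (by ring) (by ring), mul_eq_zero] at h₁
  rw [integral_Ioo_eval_eq_mul_integral_comp q hΔx (d := xi) (s := -1 / 2) (t := 1 / 2)
    (by norm_num) (by ring) (by ring), mul_eq_zero] at h₂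
  rw [integral_Ioo_eval_eq_mul_integral_comp q hΔx (d := xi) (s := 1 / 2) (t := 3 / 2)
    (by norm_num) (by ring) (by ring), mul_eq_zero] at h₃
  have hlin : (C Δx * X + C xi).natDegree = 1 := natDegree_linear hΔx.ne'
  have hdeg : (q.comp (C Δx * X + C xi)).degree ≤ 4 := by
    refine degree_le_of_natDegree_le ?_
    rw [natDegree_comp, hlin, mul_one]
    exact natDegree_le_of_degree_le hq
  have heval (s : ℝ) : (q.comp (C Δx * X + C xi)).eval s = q.eval (Δx * s + xi) := by simp
  have hcomp : q.comp (C Δx * X + C xi) = 0 :=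
    eq_zero_of_shweno_unit_stencil hdeg (h₁.resolve_left hΔx.ne') (h₂.resolve_left hΔx.ne')
      (h₃.resolve_left hΔx.ne')
      (by rw [heval, heval]; convert h₄ using 2 <;> ring)
      (by rw [heval, heval]; convert h₅ using 2 <;> ring)
  refine (comp_eq_zero_iff.mp hcomp).resolve_right fun ⟨_, hC⟩ => ?_
  simpa [hlin] using congrArg natDegree hC

/-- Existence and uniqueness of the SHWENO quartic: on the uniform stencil
{I_{i−1}, I_i, I_{i+1}} there is a unique polynomial of degree at most 4 whose
cell averages on the three cells and cell-averaged slopes on the two outer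
cells take prescribed values. -/
theorem shweno_quartic_exists_unique
    (Δx xi : ℝ) (hΔx : 0 < Δx) (a₁ a₂ a₃ b₁ b₃ : ℝ) :
    ∃! q : Polynomial ℝ, q.degree ≤ 4 ∧
      (1 / Δx) * (∫ x in Set.Ioo (xi - (3 / 2) * Δx) (xi - (1 / 2) * Δx), q.eval x) = a₁ ∧
      (1 / Δx) * (∫ x in Set.Ioo (xi - (1 / 2) * Δx) (xi + (1 / 2) * Δx), q.eval x) = a₂ ∧
      (1 / Δx) * (∫ x in Set.Ioo (xi + (1 / 2) * Δx) (xi + (3 / 2) * Δx), q.eval x) = a₃ ∧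
      (1 / Δx) *
        (∫ x in Set.Ioo (xi - (3 / 2) * Δx) (xi - (1 / 2) * Δx),
          (Polynomial.derivative q).eval x) = b₁ ∧
      (1 / Δx) *
        (∫ x in Set.Ioo (xi + (1 / 2) * Δx) (xi + (3 / 2) * Δx),
          (Polynomial.derivative q).eval x) = b₃ := by
  have hdim : Module.finrank ℝ (ℝ × ℝ × ℝ × ℝ × ℝ) = 4 + 1 := by simp
  simpa only [shwenoData_apply, Prod.mk.injEq, Nat.cast_ofNat] using
    existsUnique_degree_le_of_eq_zero hdim (shwenoData Δx xi)
      (fun _ hq => eq_zero_of_shwenoData_eq_zero hΔx xi hq) (a₁, a₂, a₃, b₁, b₃)
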